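/- arXiv:2308.06059 — 10 statements merged into one kernel-verified Lean document; each statement's English description precedes it below -/
import Mathlib

section
/- Let n ≥ 1 be an integer and let ω ∈ ℝ \ ℤ. Consider the n×n Toeplitz matrix 𝔗 whose (k,ℓ) entry (0 ≤ k,ℓ ≤ n−1) is μ_{ℓ−k}, where μ_j = (−1)^j sin(πω)/(π(j+ω)) for j ∈ ℤ. Then det 𝔗 = (sin(πω)/(πω))^n · (∏_{ℓ=0}^{n−1} (ℓ!)²) / (∏_{k=1}^{n−1} (k² − ω²)^{n−k}). -/
/-!
Up to the signs `(-1)^k (-1)^ℓ`, which cancel in the determinant, and the scalar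
`sin(πω)/π`, the matrix is the Cauchy matrix `1 / (x_k + y_ℓ)` with `x_k = -k` and
`y_ℓ = ℓ + ω`.
In Cauchy's determinant formula the factors belonging to a pair `i < j` combine, without any
sign bookkeeping, to `(j - i)² / ((j - i)² - ω²)`, and the diagonal contributes `ω⁻ⁿ`.
Grouping the pairs by `d = j - i`, which occurs `n - d` times, yields the products over `d`
and the squared superfactorial.

Cauchy's formula itself comes from Vandermonde: `1 / (x_i + y_j) = p_j(x_i) / ∏_k (x_i + y_k)`
with `p_j = ∏_{k ≠ j} (X + y_k)`, so the determinant factors through the coefficient matrix of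
the `p_j`, whose determinant is read off from the diagonal matrix `(p_j(-y_i))`.
-/

open Finset Polynomial

section PairProducts

variable {M : Type*} [CommMonoid M]

theorem Finset.prod_prod_erase_eq_prod_prod_Ioi {ι : Type*} [Fintype ι] [LinearOrder ι]
    [LocallyFiniteOrderBot ι] [LocallyFiniteOrderTop ι] (g : ι → ι → M) :
    ∏ i, ∏ j ∈ univ.erase i, g i j = ∏ i, ∏ j ∈ Ioi i, g i j * g j i := by
  have herase (i : ι) : univ.erase i = Iio i ∪ Ioi i := by
    ext j
    simp [eq_comm]
  have hswap : ∏ i, ∏ j ∈ Iio i, g i j = ∏ j, ∏ i ∈ Ioi j, g i j :=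
    prod_comm' (by simp)
  simp_rw [herase, prod_union (disjoint_left.2 fun j hj hj' =>
    (mem_Iio.1 hj).asymm (mem_Ioi.1 hj')), prod_mul_distrib, hswap, mul_comm]

theorem Fin.prod_prod_Ioi_sub (f : ℕ → M) (n : ℕ) :
    ∏ i : Fin n, ∏ j ∈ Ioi i, f (j - i) = ∏ m ∈ range n, ∏ d ∈ Icc 1 m, f d := by
  induction n with
  | zero => simp
  | succ n ih =>
    rw [Fin.prod_univ_succ, Fin.prod_Ioi_zero, prod_range_succ, mul_comm]
    simp only [Fin.prod_Ioi_succ, Fin.val_succ, Nat.add_sub_add_right, ih, Fin.val_zero,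
      Nat.sub_zero]
    congr 1
    rw [Fin.prod_univ_eq_prod_range (fun j => f (j + 1)), ← Finset.Ico_add_one_right_eq_Icc,
      prod_Ico_eq_prod_range]
    simp [add_comm]

theorem Finset.prod_range_prod_Icc (f : ℕ → M) (n : ℕ) :
    ∏ m ∈ range n, ∏ d ∈ Icc 1 m, f d = ∏ d ∈ Icc 1 (n - 1), f d ^ (n - d) := by
  rw [prod_comm' (t' := Icc 1 (n - 1)) (s' := fun d => Ico d n)]
  · simp
  · intro m d
    simp only [mem_range, mem_Icc, mem_Ico]
    omega

end PairProducts

namespace Matrix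

variable {K : Type*} [Field K] {n : ℕ}

theorem of_eval_eq_vandermonde_mul_coeff {R : Type*} [CommRing R] (v : Fin n → R)
    (p : Fin n → R[X]) (h_deg : ∀ j, (p j).natDegree < n) :
    of (fun i j => (p j).eval (v i)) = vandermonde v * of (fun i j : Fin n => (p j).coeff i) := by
  ext i j
  simp_rw [mul_apply, eval, of_apply, eval₂_eq_sum, vandermonde_apply]
  rw [sum_eq_of_subset _ (fun k => zero_mul (v i ^ k)) (supp_subset_range (h_deg j)),
    ← Fin.sum_univ_eq_sum_range (fun k => (RingHom.id R) ((p j).coeff k) * v i ^ k)]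
  simp [mul_comm]

theorem natDegree_prod_erase_X_add_C_lt (y : Fin n → K) (j : Fin n) :
    (∏ k ∈ univ.erase j, (X + C (y k))).natDegree < n := by
  rw [natDegree_prod _ _ fun k _ => X_add_C_ne_zero (y k)]
  simp only [natDegree_X_add_C, sum_const, smul_eq_mul, mul_one,
    card_erase_of_mem (mem_univ j), card_univ, Fintype.card_fin]
  exact Nat.sub_lt j.pos one_pos

theorem det_coeff_prod_erase_X_add_C (y : Fin n → K) (hy : Function.Injective y) :
    (of fun i j : Fin n => (∏ k ∈ univ.erase j, (X + C (y k))).coeff i).det =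
      ∏ i, ∏ j ∈ Ioi i, (y j - y i) := by
  set p : Fin n → K[X] := fun j => ∏ k ∈ univ.erase j, (X + C (y k))
  have hdiag : of (fun i j => (p j).eval (-y i)) = diagonal fun j => (p j).eval (-y j) := by
    ext i j
    rcases eq_or_ne i j with rfl | hij
    · simp
    · simp only [of_apply, diagonal_apply_ne _ hij, p, eval_prod, eval_add, eval_X, eval_C]
      exact prod_eq_zero (mem_erase.2 ⟨hij, mem_univ i⟩) (neg_add_cancel _)
  have hprod : ∏ j, (p j).eval (-y j) =
      (∏ i, ∏ j ∈ Ioi i, (y j - y i)) * ∏ i, ∏ j ∈ Ioi i, (y i - y j) := by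
    simp only [p, eval_prod, eval_add, eval_X, eval_C, neg_add_eq_sub,
      prod_prod_erase_eq_prod_prod_Ioi (fun j k => y k - y j), prod_mul_distrib]
  have hV : (vandermonde fun i => -y i).det = ∏ i, ∏ j ∈ Ioi i, (y i - y j) := by
    simp only [det_vandermonde, sub_neg_eq_add, neg_add_eq_sub]
  have hV₀ : (vandermonde fun i => -y i).det ≠ 0 :=
    det_vandermonde_ne_zero_iff.2 (neg_injective.comp hy)
  refine mul_left_cancel₀ hV₀ ?_
  rw [← det_mul, ← of_eval_eq_vandermonde_mul_coeff _ p (natDegree_prod_erase_X_add_C_lt y),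
    hdiag, det_diagonal, hprod, hV, mul_comm]

theorem det_cauchy (x y : Fin n → K) (hy : Function.Injective y)
    (hxy : ∀ i j, x i + y j ≠ 0) :
    (of fun i j => (x i + y j)⁻¹).det =
      (∏ i, ∏ j ∈ Ioi i, (x j - x i)) * (∏ i, ∏ j ∈ Ioi i, (y j - y i)) /
        ∏ i, ∏ j, (x i + y j) := by
  set p : Fin n → K[X] := fun j => ∏ k ∈ univ.erase j, (X + C (y k))
  have hentry : of (fun i j => (x i + y j)⁻¹) =
      of fun i j => (∏ k, (x i + y k))⁻¹ * of (fun i j => (p j).eval (x i)) i j := by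
    ext i j
    simp only [of_apply, p, eval_prod, eval_add, eval_X, eval_C,
      ← mul_prod_erase univ _ (mem_univ j), mul_inv,
      inv_mul_cancel_right₀ (prod_ne_zero_iff.2 fun k _ => hxy i k)]
  rw [hentry, det_mul_column,
    of_eval_eq_vandermonde_mul_coeff _ p (natDegree_prod_erase_X_add_C_lt y), det_mul,
    det_vandermonde, det_coeff_prod_erase_X_add_C y hy, prod_inv_distrib, inv_mul_eq_div]

theorem det_cauchy_eq_prod_pairs (x y : Fin n → K) (hy : Function.Injective y)
    (hxy : ∀ i j, x i + y j ≠ 0) :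
    (of fun i j => (x i + y j)⁻¹).det =
      (∏ i, ∏ j ∈ Ioi i, (x j - x i) * (y j - y i) / ((x i + y j) * (x j + y i))) /
        ∏ i, (x i + y i) := by
  have hden : ∏ i, ∏ j, (x i + y j) =
      (∏ i, (x i + y i)) * ∏ i, ∏ j ∈ Ioi i, (x i + y j) * (x j + y i) := by
    rw [← prod_prod_erase_eq_prod_prod_Ioi (fun i j => x i + y j), ← prod_mul_distrib]
    exact prod_congr rfl fun i _ => (mul_prod_erase univ _ (mem_univ i)).symm
  rw [det_cauchy x y hy hxy, hden]
  simp only [prod_div_distrib, prod_mul_distrib]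
  ring

open Nat in
theorem det_inv_natCast_sub_natCast_add [CharZero K] (ω : K) (hω : ∀ m : ℤ, ω ≠ m) :
    (of fun k ℓ : Fin n => ((ℓ : K) - k + ω)⁻¹).det =
      (∏ m ∈ range n, (m ! : K) ^ 2) /
        (ω ^ n * ∏ d ∈ Icc 1 (n - 1), ((d : K) ^ 2 - ω ^ 2) ^ (n - d)) := by
  set x : Fin n → K := fun k => -(k : K)
  set y : Fin n → K := fun ℓ => (ℓ : K) + ω
  have hxy (k ℓ : Fin n) : x k + y ℓ ≠ 0 := fun h =>
    hω ((k : ℤ) - ℓ) (by push_cast; linear_combination h)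
  have hy : Function.Injective y := fun a b h => Fin.val_injective (by simpa [y] using h)
  have hmat :
      (of fun k ℓ : Fin n => ((ℓ : K) - k + ω)⁻¹) = of fun k ℓ => (x k + y ℓ)⁻¹ := by
    ext k ℓ
    simp only [of_apply, x, y]
    ring
  have hpair (i j : Fin n) (hij : i < j) :
      (x j - x i) * (y j - y i) / ((x i + y j) * (x j + y i)) =
        ((j - i : ℕ) : K) ^ 2 / (((j - i : ℕ) : K) ^ 2 - ω ^ 2) := by
    rw [Nat.cast_sub hij.le, ← neg_div_neg_eq]
    ring
  have hdiag : ∏ i, (x i + y i) = ω ^ n := by simp [x, y]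
  have hfactorial (m : ℕ) : ∏ d ∈ Icc 1 m, (d : K) ^ 2 = (m ! : K) ^ 2 := by
    rw [prod_pow, ← Nat.cast_prod, ← Ico_add_one_right_eq_Icc, prod_Ico_id_eq_factorial]
  rw [hmat, det_cauchy_eq_prod_pairs x y hy hxy, hdiag,
    prod_congr rfl fun i _ => prod_congr rfl fun j hj => hpair i j (mem_Ioi.1 hj),
    Fin.prod_prod_Ioi_sub (fun d => (d : K) ^ 2 / ((d : K) ^ 2 - ω ^ 2))]
  simp only [prod_div_distrib, hfactorial]
  rw [prod_range_prod_Icc, div_div, mul_comm]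

theorem det_neg_one_pow_mul_neg_one_pow_mul {R : Type*} [CommRing R]
    (A : Matrix (Fin n) (Fin n) R) :
    (of fun i j : Fin n => (-1) ^ (i : ℕ) * (-1) ^ (j : ℕ) * A i j).det = A.det := by
  have h := det_mul_column (fun i : Fin n => (-1 : R) ^ (i : ℕ))
    (of fun i j : Fin n => (-1 : R) ^ (j : ℕ) * A i j)
  simp only [det_mul_row, of_apply, ← mul_assoc] at h
  rw [h, ← prod_mul_distrib]
  simp [← mul_pow]

end Matrix

theorem toeplitz_det_formula_general (n : ℕ) (ω : ℝ) (hω : ∀ m : ℤ, ω ≠ m) :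
    (Matrix.of fun k ℓ : Fin n =>
        (-1 : ℝ) ^ ((ℓ : ℤ) - (k : ℤ)) * Real.sin (Real.pi * ω) /
          (Real.pi * ((((ℓ : ℤ) - (k : ℤ) : ℤ) : ℝ) + ω))).det
      = (Real.sin (Real.pi * ω) / (Real.pi * ω)) ^ n *
          (∏ ℓ ∈ Finset.range n, ((ℓ.factorial : ℝ)) ^ 2) /
          ∏ k ∈ Finset.Icc 1 (n - 1), ((k : ℝ) ^ 2 - ω ^ 2) ^ (n - k) := by
  set s := Real.sin (Real.pi * ω)
  set A : Matrix (Fin n) (Fin n) ℝ := Matrix.of fun k ℓ => ((ℓ : ℝ) - k + ω)⁻¹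
  calc _ = (Matrix.of fun k ℓ : Fin n =>
          (-1) ^ (k : ℕ) * (-1) ^ (ℓ : ℕ) * ((s / Real.pi) • A) k ℓ).det := by
        congr 1
        ext k ℓ
        simp only [Matrix.of_apply, Matrix.smul_apply, smul_eq_mul, A]
        rw [zpow_sub₀ (by norm_num), zpow_natCast, zpow_natCast,
          div_eq_mul_inv (b := (-1 : ℝ) ^ _), ← inv_pow, inv_neg, inv_one]
        push_cast
        field_simp
    _ = (s / Real.pi) ^ n * A.det := by
        rw [Matrix.det_neg_one_pow_mul_neg_one_pow_mul, Matrix.det_smul, Fintype.card_fin]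
    _ = _ := by
        rw [Matrix.det_inv_natCast_sub_natCast_add ω hω, mul_comm Real.pi, ← div_div, div_pow]
        ring

theorem toeplitz_det_formula (n : ℕ) (hn : 1 ≤ n) (ω : ℝ) (hω : ∀ m : ℤ, ω ≠ m) :
    (Matrix.of fun k ℓ : Fin n =>
        (-1 : ℝ) ^ ((ℓ : ℤ) - (k : ℤ)) * Real.sin (Real.pi * ω) /
          (Real.pi * ((((ℓ : ℤ) - (k : ℤ) : ℤ) : ℝ) + ω))).det
      = (Real.sin (Real.pi * ω) / (Real.pi * ω)) ^ n *
          (∏ ℓ ∈ Finset.range n, ((ℓ.factorial : ℝ)) ^ 2) /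
          ∏ k ∈ Finset.Icc 1 (n - 1), ((k : ℝ) ^ 2 - ω ^ 2) ^ (n - k) :=
  toeplitz_det_formula_general n ω hω
end

section
/- Let n ≥ 1 be an integer and let ω ∈ ℝ \ ℤ. Consider the n×n Toeplitz matrix 𝔗 whose (k,ℓ) entry (0 ≤ k,ℓ ≤ n−1) is μ_{ℓ−k}, where μ_j = (−1)^j sin(πω)/(π(j+ω)) for j ∈ ℤ. Then det 𝔗 ≠ 0. -/
/-!
Up to scaling the rows by `sin (π ω) / π · (-1)^k` and the columns by `(-1)^ℓ`, the
Toeplitz matrix is the Cauchy matrix `((ω - k) - (-ℓ))⁻¹`, whose nodes `ω - k` and `-ℓ` are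
pairwise distinct and never collide because `ω ∉ ℤ`. A Cauchy matrix is nonsingular: if
`∑ⱼ cⱼ / (xᵢ - yⱼ) = 0` for all `i`, then `p = ∑ⱼ cⱼ ∏_{m ≠ j} (X - yₘ)` has degree `< n` and
vanishes at the `n` points `xᵢ`, so `p = 0`, and evaluating at `yⱼ` gives `cⱼ = 0`.
-/

open Finset Polynomial

namespace Matrix

variable {K ι : Type*} [Field K] [Fintype ι] [DecidableEq ι]

def cauchy (x y : ι → K) : Matrix ι ι K :=
  of fun i j => (x i - y j)⁻¹

theorem eq_zero_of_cauchy_mulVec_eq_zero {x y : ι → K} (hx : Function.Injective x)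
    (hy : Function.Injective y) (hxy : ∀ i j, x i ≠ y j) {c : ι → K}
    (hc : cauchy x y *ᵥ c = 0) : c = 0 := by
  set p : K[X] := ∑ j, c j • Lagrange.nodal (univ.erase j) y
  have hp_degree : p.degree < #(univ : Finset ι) := by
    rw [← mem_degreeLT]
    refine Submodule.sum_mem _ fun j _ => Submodule.smul_mem _ _ (mem_degreeLT.mpr ?_)
    rw [Lagrange.degree_nodal]
    exact_mod_cast card_erase_lt_of_mem (mem_univ j)
  have hp_eval (i : ι) : p.eval (x i) = 0 := by
    have hx_ne (j : ι) : x i - y j ≠ 0 := sub_ne_zero.mpr (hxy i j)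
    calc p.eval (x i) = ∑ j, (∏ m, (x i - y m)) * ((x i - y j)⁻¹ * c j) := by
          simp only [p, eval_finsetSum, eval_smul, smul_eq_mul, Lagrange.eval_nodal]
          refine sum_congr rfl fun j _ => ?_
          rw [← mul_prod_erase univ _ (mem_univ j)]
          field_simp [hx_ne j]
      _ = 0 := by
          rw [← mul_sum]
          simpa [cauchy, mulVec, dotProduct] using
            congrArg ((∏ m, (x i - y m)) * ·) (congrFun hc i)
  have hp : p = 0 :=
    Polynomial.eq_zero_of_degree_lt_of_eval_index_eq_zero univ hx.injOn hp_degree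
      fun i _ => hp_eval i
  funext j
  have hp_yj := congrArg (eval (y j)) hp
  rw [eval_finsetSum, sum_eq_single j (fun k _ hkj => by
      rw [eval_smul, Lagrange.eval_nodal_at_node (mem_erase.mpr ⟨Ne.symm hkj, mem_univ j⟩),
        smul_zero]) (by simp), eval_smul, smul_eq_mul, eval_zero] at hp_yj
  refine (mul_eq_zero.mp hp_yj).resolve_right (Lagrange.eval_nodal_not_at_node fun m hm => ?_)
  exact hy.ne (mem_erase.mp hm).1.symm

theorem det_cauchy_ne_zero {x y : ι → K} (hx : Function.Injective x)
    (hy : Function.Injective y) (hxy : ∀ i j, x i ≠ y j) :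
    (cauchy x y).det ≠ 0 := fun hdet =>
  let ⟨_, hc_ne, hc⟩ := exists_mulVec_eq_zero_iff.mpr hdet
  hc_ne (eq_zero_of_cauchy_mulVec_eq_zero hx hy hxy hc)

end Matrix

theorem Real.sin_pi_mul_ne_zero {ω : ℝ} (hω : ∀ m : ℤ, ω ≠ m) :
    Real.sin (Real.pi * ω) ≠ 0 := fun h =>
  let ⟨m, hm⟩ := Real.sin_eq_zero_iff.mp h
  hω m (mul_left_cancel₀ Real.pi_ne_zero (by rw [← hm, mul_comm]))

theorem toeplitz_entry_eq (ω : ℝ) (k ℓ : ℤ) :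
    (-1 : ℝ) ^ (ℓ - k) * Real.sin (Real.pi * ω) / (Real.pi * (((ℓ - k : ℤ) : ℝ) + ω)) =
      Real.sin (Real.pi * ω) / Real.pi / (-1 : ℝ) ^ k *
        ((-1 : ℝ) ^ ℓ * ((ω - k) - (-ℓ : ℝ))⁻¹) := by
  rw [zpow_sub₀ (by norm_num), div_eq_mul_inv, mul_inv]
  push_cast
  ring_nf

theorem toeplitz_det_ne_zero_general (n : ℕ) (ω : ℝ) (hω : ∀ m : ℤ, ω ≠ m) :
    (Matrix.of fun k ℓ : Fin n =>
        (-1 : ℝ) ^ ((ℓ : ℤ) - (k : ℤ)) * Real.sin (Real.pi * ω) /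
          (Real.pi * ((((ℓ : ℤ) - (k : ℤ) : ℤ) : ℝ) + ω))).det ≠ 0 := by
  set x : Fin n → ℝ := fun k => ω - (k : ℤ)
  set y : Fin n → ℝ := fun ℓ => -(ℓ : ℤ)
  have hx : Function.Injective x := fun k k' h => Fin.ext (by simpa [x] using h)
  have hy : Function.Injective y := fun ℓ ℓ' h => Fin.ext (by simpa [y] using h)
  have hxy (k ℓ : Fin n) : x k ≠ y ℓ := fun h =>
    hω ((k : ℤ) - (ℓ : ℤ)) (by simp only [x, y] at h; push_cast at h ⊢; linarith)
  simp only [toeplitz_entry_eq]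
  refine (Matrix.det_mul_column
    (fun k : Fin n => Real.sin (Real.pi * ω) / Real.pi / (-1) ^ (k : ℤ))
    (Matrix.of fun k ℓ => (-1 : ℝ) ^ (ℓ : ℤ) * Matrix.cauchy x y k ℓ)).trans_ne ?_
  rw [Matrix.det_mul_row]
  refine mul_ne_zero (prod_ne_zero_iff.mpr fun k _ => ?_) <|
    mul_ne_zero (prod_ne_zero_iff.mpr fun ℓ _ => ?_) (Matrix.det_cauchy_ne_zero hx hy hxy)
  · exact div_ne_zero (div_ne_zero (Real.sin_pi_mul_ne_zero hω) Real.pi_ne_zero)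
      (zpow_ne_zero _ (by norm_num))
  · exact zpow_ne_zero _ (by norm_num)

theorem toeplitz_det_ne_zero (n : ℕ) (hn : 1 ≤ n) (ω : ℝ) (hω : ∀ m : ℤ, ω ≠ m) :
    (Matrix.of fun k ℓ : Fin n =>
        (-1 : ℝ) ^ ((ℓ : ℤ) - (k : ℤ)) * Real.sin (Real.pi * ω) /
          (Real.pi * ((((ℓ : ℤ) - (k : ℤ) : ℤ) : ℝ) + ω))).det ≠ 0 :=
  toeplitz_det_ne_zero_general n ω hω
end

section
/- Let ω > 0 be a real number, n ∈ ℕ, and let k be an integer with 0 ≤ k ≤ n−1. Then ∫_{−π}^{π} S_n^ω(e^{iθ}) e^{i(ω−k)θ} dθ = 0; that is, S_n^ω is orthogonal to z^k with respect to the bilinear form ⟨f,g⟩_ω = (1/2π)∫_{−π}^{π} f(e^{iθ}) g(e^{−iθ}) e^{iωθ} dθ. -/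
/-!
Expanding `S_n^ω(e^{iθ})`, the integral becomes `Σ_ℓ c_ℓ ∫_{-π}^{π} e^{i a_ℓ θ} dθ` with
`a_ℓ = ω + n - ℓ - k`, and `a · ∫_{-π}^{π} e^{i a θ} dθ = 2 sin (a π)` for every `a`, including
`a = 0`. The Pochhammer ratio in `c_ℓ` equals `desc_n(ω + n - ℓ) / desc_n(ω + n)` (falling
factorials), and `desc_n(y)` has the root `y = k`, so
`c_ℓ = binom(n, ℓ) · a_ℓ · p(ℓ) / desc_n(ω + n)` for a polynomial `p` of degree `< n`.
Since `sin (a_ℓ π) = (-1)^(n-ℓ) sin ((ω - k) π)`, the integral is a multiple of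
`Σ_ℓ (-1)^(n-ℓ) binom(n, ℓ) p(ℓ)`, the `n`-th forward difference of `p`, which vanishes.
-/

open Finset Polynomial

/-- The monic skyburst polynomial
`S_n^ω(z) = Σ_{ℓ=0}^n binom(n,ℓ) · (−ω)_ℓ/(−n−ω)_ℓ · z^{n−ℓ}`,
where `(a)_ℓ` is the Pochhammer (rising factorial) symbol. -/
noncomputable def skyburst (n : ℕ) (ω : ℝ) (z : ℂ) : ℂ :=
  ∑ ℓ ∈ Finset.range (n + 1),
    (n.choose ℓ : ℂ) *
      ((ascPochhammer ℂ ℓ).eval (-(ω : ℂ)) / (ascPochhammer ℂ ℓ).eval (-(n : ℂ) - (ω : ℂ))) *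
      z ^ (n - ℓ)

theorem Polynomial.sum_range_neg_one_pow_mul_choose_mul_eval_eq_zero {R : Type*} [CommRing R]
    {p : R[X]} {n : ℕ} (hp : p.natDegree < n) :
    ∑ ℓ ∈ range (n + 1), (-1 : R) ^ (n - ℓ) * n.choose ℓ * p.eval (ℓ : R) = 0 := by
  have h := congrFun (fwdDiff_iter_eq_zero_of_degree_lt hp) 0
  rw [fwdDiff_iter_eq_sum_shift] at h
  simpa using h

section Pochhammer

variable {R : Type*} [CommRing R]

theorem descPochhammer_eval_mul_eval_sub (x : R) (m l : ℕ) :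
    (descPochhammer R m).eval x * (descPochhammer R l).eval (x - m) =
      (descPochhammer R (m + l)).eval x := by
  simpa using congrArg (eval x) (descPochhammer_mul (R := R) m l)

theorem ascPochhammer_eval_neg_mul_descPochhammer_eval (x : R) (n ℓ : ℕ) :
    (ascPochhammer R ℓ).eval (-x) * (descPochhammer R n).eval (x + n) =
      (ascPochhammer R ℓ).eval (-n - x) * (descPochhammer R n).eval (x + n - ℓ) := by
  have h₁ := descPochhammer_eval_mul_eval_sub (x + n) n ℓ
  have h₂ := descPochhammer_eval_mul_eval_sub (x + n) ℓ n
  rw [add_sub_cancel_right, add_comm n] at h₁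
  rw [show -(n : R) - x = -(x + n) by ring, ascPochhammer_eval_neg_eq_descPochhammer,
    ascPochhammer_eval_neg_eq_descPochhammer]
  linear_combination (-1 : R) ^ ℓ * (h₁ - h₂)

theorem exists_descPochhammer_eval_sub_eq_mul [IsDomain R] (c : R) {n k : ℕ} (hk : k < n) :
    ∃ p : R[X], p.natDegree < n ∧
      ∀ x : R, (descPochhammer R n).eval (c - x) = (c - x - k) * p.eval x := by
  have hroot : (descPochhammer R n).IsRoot (k : R) := by
    rw [IsRoot, descPochhammer_eval_eq_descFactorial, Nat.descFactorial_eq_zero_iff_lt.2 hk,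
      Nat.cast_zero]
  set r := descPochhammer R n /ₘ (X - C (k : R))
  have hr : r.natDegree < n := by
    rw [natDegree_divByMonic _ (monic_X_sub_C _), descPochhammer_natDegree, natDegree_X_sub_C]
    omega
  refine ⟨r.comp (C c - X), ?_, fun x => ?_⟩
  · exact (natDegree_comp_le.trans
      (mul_le_of_le_one_right (Nat.zero_le _) (by compute_degree))).trans_lt hr
  · conv_lhs => rw [← mul_divByMonic_eq_iff_isRoot.2 hroot]
    simp [r]

end Pochhammer

theorem descPochhammer_eval_ofReal_ne_zero {x : ℝ} {ℓ : ℕ} (h : (ℓ : ℝ) - 1 < x) :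
    (descPochhammer ℂ ℓ).eval (x : ℂ) ≠ 0 := by
  have hpos := ascPochhammer_pos ℓ (x - ℓ + 1) (by linarith)
  rw [← descPochhammer_eval_eq_ascPochhammer] at hpos
  rw [← descPochhammer_map Complex.ofRealHom, eval_map, ← Complex.ofRealHom_eq_coe,
    eval₂_at_apply]
  exact Complex.ofReal_ne_zero.2 hpos.ne'

theorem mul_integral_exp_I_mul_eq_two_mul_sin (a : ℂ) :
    a * ∫ θ in (-Real.pi)..Real.pi, Complex.exp (Complex.I * a * θ) =
      2 * Complex.sin (a * Real.pi) := by
  rcases eq_or_ne a 0 with rfl | ha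
  · simp
  rw [integral_exp_mul_complex (mul_ne_zero Complex.I_ne_zero ha), Complex.two_sin,
    mul_div_assoc', mul_comm Complex.I a, mul_div_mul_left _ _ ha, Complex.div_I]
  push_cast
  ring_nf

theorem skyburst_eq_sum_descPochhammer {ω : ℝ} (hω : 0 < ω) (n : ℕ) (z : ℂ) :
    skyburst n ω z = ∑ ℓ ∈ range (n + 1),
      n.choose ℓ * (descPochhammer ℂ n).eval ((ω : ℂ) + n - ℓ) /
        (descPochhammer ℂ n).eval ((ω : ℂ) + n) * z ^ (n - ℓ) := by
  have hD : (descPochhammer ℂ n).eval ((ω : ℂ) + n) ≠ 0 := by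
    exact_mod_cast descPochhammer_eval_ofReal_ne_zero (x := ω + n) (by linarith)
  refine sum_congr rfl fun ℓ hℓ => ?_
  have hQ : (ascPochhammer ℂ ℓ).eval (-(n : ℂ) - ω) ≠ 0 := by
    have hℓn : (ℓ : ℝ) ≤ n := by exact_mod_cast Nat.lt_succ_iff.1 (mem_range.1 hℓ)
    rw [show -(n : ℂ) - ω = -(ω + n) by ring, ascPochhammer_eval_neg_eq_descPochhammer]
    exact mul_ne_zero (pow_ne_zero _ (by norm_num))
      (by exact_mod_cast descPochhammer_eval_ofReal_ne_zero (x := ω + n) (by linarith))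
  congr 1
  field_simp
  linear_combination (n.choose ℓ : ℂ) * ascPochhammer_eval_neg_mul_descPochhammer_eval (ω : ℂ) n ℓ

theorem integral_skyburst_mul_exp {ω : ℝ} (hω : 0 < ω) (n : ℕ) (c : ℂ) :
    ∫ θ in (-Real.pi)..Real.pi,
        skyburst n ω (Complex.exp (Complex.I * θ)) * Complex.exp (Complex.I * c * θ) =
      ∑ ℓ ∈ range (n + 1),
        n.choose ℓ * (descPochhammer ℂ n).eval ((ω : ℂ) + n - ℓ) /
          (descPochhammer ℂ n).eval ((ω : ℂ) + n) *
          ∫ θ in (-Real.pi)..Real.pi, Complex.exp (Complex.I * (n - ℓ + c) * θ) := by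
  simp_rw [skyburst_eq_sum_descPochhammer hω, sum_mul, mul_assoc, ← Complex.exp_nat_mul,
    ← Complex.exp_add]
  rw [intervalIntegral.integral_finsetSum
    fun ℓ _ => (by fun_prop : Continuous _).intervalIntegrable _ _]
  refine sum_congr rfl fun ℓ hℓ => ?_
  rw [← intervalIntegral.integral_const_mul, Nat.cast_sub (Nat.lt_succ_iff.1 (mem_range.1 hℓ))]
  congr! 4
  ring

theorem skyburst_orthogonal (ω : ℝ) (hω : 0 < ω) (n : ℕ) (k : ℕ) (hk : k < n) :
    ∫ θ in (-Real.pi)..Real.pi,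
        skyburst n ω (Complex.exp (Complex.I * (θ : ℂ))) *
          Complex.exp (Complex.I * ((ω : ℂ) - (k : ℂ)) * (θ : ℂ)) = 0 := by
  set D := (descPochhammer ℂ n).eval ((ω : ℂ) + n)
  obtain ⟨p, hp, hfactor⟩ := exists_descPochhammer_eval_sub_eq_mul ((ω : ℂ) + n) hk
  have hterm : ∀ ℓ ∈ range (n + 1),
      n.choose ℓ * (descPochhammer ℂ n).eval ((ω : ℂ) + n - ℓ) / D *
          ∫ θ in (-Real.pi)..Real.pi, Complex.exp (Complex.I * (n - ℓ + (ω - k)) * θ) =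
        2 * Complex.sin ((ω - k) * Real.pi) / D *
          ((-1) ^ (n - ℓ) * n.choose ℓ * p.eval (ℓ : ℂ)) := by
    intro ℓ hℓ
    have hsin : Complex.sin ((n - ℓ + (ω - k)) * Real.pi) =
        (-1) ^ (n - ℓ) * Complex.sin ((ω - k) * Real.pi) := by
      rw [← Complex.sin_antiperiodic.add_nat_mul_eq,
        Nat.cast_sub (Nat.lt_succ_iff.1 (mem_range.1 hℓ))]
      ring_nf
    rw [hfactor, show (ω : ℂ) + n - ℓ - k = n - ℓ + (ω - k) by ring, mul_comm _ (p.eval _),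
      ← mul_assoc, mul_div_right_comm, mul_assoc, mul_integral_exp_I_mul_eq_two_mul_sin, hsin]
    ring
  rw [integral_skyburst_mul_exp hω, sum_congr rfl hterm, ← mul_sum,
    sum_range_neg_one_pow_mul_choose_mul_eval_eq_zero hp, mul_zero]
end

section
/- Let ω > 0 be a real number and n ≥ 1 an integer. Then for every z ∈ ℂ, S_n^ω(z) = z·S_{n−1}^ω(z) + (ω²/((ω+n−1)(ω+n)))·S_{n−1}^{ω−1}(z). -/
open Finset Polynomial

/-!
Write `S_n^ω(z) = Σ_ℓ c_ℓ(n, ω) z^(n-ℓ)`. Comparing coefficients, the recurrence says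
`c_(k+1)(m+1, ω) = c_(k+1)(m, ω) + ω² / ((ω+m)(ω+m+1)) · c_k(m, ω-1)`, and `c_0 = 1`.
Peeling one linear factor off each Pochhammer symbol and clearing denominators, this coefficient
identity becomes Pascal's rule together with `(k+1) binom(m, k+1) = (m-k) binom(m, k)`.
-/

theorem sum_range_succ_mul_pow_sub_eq {R : Type*} [CommSemiring R] (a p q : ℕ → R) (c z : R)
    (m : ℕ) (h0 : a 0 = p 0) (hsucc : ∀ k, a (k + 1) = p (k + 1) + c * q k)
    (hp : p (m + 1) = 0) :
    ∑ ℓ ∈ range (m + 2), a ℓ * z ^ (m + 1 - ℓ) =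
      z * ∑ ℓ ∈ range (m + 1), p ℓ * z ^ (m - ℓ) + c * ∑ ℓ ∈ range (m + 1), q ℓ * z ^ (m - ℓ) := by
  have hz : z * ∑ ℓ ∈ range (m + 1), p ℓ * z ^ (m - ℓ) =
      ∑ ℓ ∈ range (m + 2), p ℓ * z ^ (m + 1 - ℓ) := by
    rw [sum_range_succ _ (m + 1), hp, zero_mul, add_zero, mul_sum]
    refine sum_congr rfl fun ℓ hℓ => ?_
    rw [Nat.sub_add_comm (Nat.lt_succ_iff.mp (mem_range.mp hℓ)), pow_succ]
    ring
  rw [hz, sum_range_succ', sum_range_succ' _ (m + 1), mul_sum]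
  simp only [hsucc, h0, Nat.add_sub_add_right, add_mul, mul_assoc, sum_add_distrib]
  ring

theorem ascPochhammer_succ_eval_left {S : Type*} [CommSemiring S] (k : ℕ) (x : S) :
    (ascPochhammer S (k + 1)).eval x = x * (ascPochhammer S k).eval (x + 1) := by
  simp [ascPochhammer_succ_left, eval_comp]

theorem add_natCast_sub_natCast_ne_zero {ω : ℂ} {N : ℕ} (hω : ∀ i : ℕ, i ≤ N → ω + i ≠ 0)
    {a j : ℕ} (ha : a ≤ N) (hj : j ≤ a) : ω + a - j ≠ 0 := by
  simpa [Nat.cast_sub hj, add_sub_assoc] using hω (a - j) (by omega)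

noncomputable def skyburstCoeff (n : ℕ) (ω : ℂ) (ℓ : ℕ) : ℂ :=
  n.choose ℓ * ((ascPochhammer ℂ ℓ).eval (-ω) / (ascPochhammer ℂ ℓ).eval (-n - ω))

theorem skyburst_eq_sum (n : ℕ) (ω : ℝ) (z : ℂ) :
    skyburst n ω z = ∑ ℓ ∈ range (n + 1), skyburstCoeff n ω ℓ * z ^ (n - ℓ) := rfl

@[simp]
theorem skyburstCoeff_zero_right (n : ℕ) (ω : ℂ) : skyburstCoeff n ω 0 = 1 := by
  simp [skyburstCoeff]

theorem skyburstCoeff_of_lt {n ℓ : ℕ} (ω : ℂ) (h : n < ℓ) : skyburstCoeff n ω ℓ = 0 := by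
  simp [skyburstCoeff, Nat.choose_eq_zero_of_lt h]

theorem skyburstCoeff_succ_succ {ω : ℂ} {m : ℕ} (hω : ∀ i : ℕ, i ≤ m + 1 → ω + i ≠ 0) (k : ℕ) :
    skyburstCoeff (m + 1) ω (k + 1) =
      skyburstCoeff m ω (k + 1) + ω ^ 2 / ((ω + m) * (ω + m + 1)) * skyburstCoeff m (ω - 1) k := by
  rcases lt_or_ge m k with hmk | hkm
  · simp [skyburstCoeff_of_lt, hmk, hmk.trans (Nat.lt_succ_self k)]
  have hω0 : ω ≠ 0 := by simpa using hω 0 (Nat.zero_le _)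
  have hωm : ω + m ≠ 0 := hω m (Nat.le_succ m)
  have hωm1 : ω + m + 1 ≠ 0 := by simpa [add_assoc] using hω (m + 1) le_rfl
  have hωmk : ω + m - k ≠ 0 := add_natCast_sub_natCast_ne_zero hω (Nat.le_succ m) hkm
  unfold skyburstCoeff
  set A := (ascPochhammer ℂ k).eval (-(ω - 1))
  set B := (ascPochhammer ℂ k).eval (-m - (ω - 1))
  set C := (ascPochhammer ℂ k).eval (-m - ω)
  have hC : C ≠ 0 := by
    simp only [C, ne_eq, ascPochhammer_eval_eq_zero_iff, not_exists, not_and]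
    intro j hj h
    exact add_natCast_sub_natCast_ne_zero hω (Nat.le_succ m) (by omega : j ≤ m) (by rw [h]; ring)
  have hnum : (ascPochhammer ℂ (k + 1)).eval (-ω) = -ω * A := by
    rw [ascPochhammer_succ_eval_left, show -ω + 1 = -(ω - 1) by ring]
  have hden : (ascPochhammer ℂ (k + 1)).eval (-↑(m + 1) - ω) = -(ω + m + 1) * C := by
    rw [ascPochhammer_succ_eval_left, show -↑(m + 1) - ω + 1 = -m - ω by push_cast; ring]
    push_cast; ring
  have hden' : (ascPochhammer ℂ (k + 1)).eval (-m - ω) = -(ω + m) * B := by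
    rw [ascPochhammer_succ_eval_left, show -m - ω + 1 = -m - (ω - 1) by ring]; ring
  -- splitting the last factor off `(-m - ω)_(k+1)` instead of the first relates `B` to `C`
  have hB : B = (ω + m - k) * C / (ω + m) := by
    rw [eq_div_iff hωm]
    linear_combination hden' - ascPochhammer_succ_eval k (-m - ω)
  have hchoose : ((k : ℂ) + 1) * m.choose (k + 1) = (m - k) * m.choose k := by
    rw [← Nat.cast_sub hkm]
    exact_mod_cast (by rw [mul_comm, Nat.choose_succ_right_eq, mul_comm] :
      (k + 1) * m.choose (k + 1) = (m - k) * m.choose k)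
  rw [hnum, hden, hden', hB, Nat.choose_succ_succ']
  push_cast
  field_simp
  linear_combination (-A) * hchoose

theorem skyburst_mixed_recurrence (ω : ℝ) (hω : 0 < ω) (n : ℕ) (hn : 1 ≤ n) (z : ℂ) :
    skyburst n ω z =
      z * skyburst (n - 1) ω z +
        ((ω : ℂ) ^ 2 / (((ω : ℂ) + (n : ℂ) - 1) * ((ω : ℂ) + (n : ℂ)))) *
          skyburst (n - 1) (ω - 1) z := by
  obtain ⟨m, rfl⟩ := Nat.exists_eq_add_of_le' hn
  have hω' : ∀ i : ℕ, i ≤ m + 1 → (ω : ℂ) + i ≠ 0 := fun i _ => by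
    exact_mod_cast (by positivity : ω + i ≠ 0)
  have hc : ((ω : ℂ) + ↑(m + 1) - 1) * (ω + ↑(m + 1)) = (ω + m) * (ω + m + 1) := by
    push_cast; ring
  simp only [skyburst_eq_sum, Nat.add_sub_cancel, Complex.ofReal_sub, Complex.ofReal_one, hc]
  exact sum_range_succ_mul_pow_sub_eq _ _ _ _ _ m (by simp) (skyburstCoeff_succ_succ hω')
    (skyburstCoeff_of_lt _ m.lt_succ_self)
end

section
/- For all natural numbers m and n and every z ∈ ℂ, z^m · S_n^m(z) = z^n · S_m^n(z); equivalently, z^{−n} S_n^m(z) = z^{−m} S_m^n(z) for z ≠ 0. -/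
/-!
At `ω = m` the numerator `(-m)_ℓ = (-1)^ℓ m(m-1)⋯(m-ℓ+1)` is a signed falling factorial, and
`binom(n,ℓ) m(m-1)⋯(m-ℓ+1) = ℓ! binom(n,ℓ) binom(m,ℓ)` is symmetric in `m` and `n`, as is the
denominator `(-n-m)_ℓ`. After multiplying `S_n^m` by `z^m` the exponents `m + n - ℓ` are symmetric
too, and both sides become the same sum over `ℓ ≤ m + n` (the terms with `ℓ > n` vanish).
-/

open Finset Polynomial

theorem ascPochhammer_eval_neg_natCast {R : Type*} [Ring R] (m k : ℕ) :
    (ascPochhammer R k).eval (-(m : R)) = (-1) ^ k * m.descFactorial k := by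
  rw [ascPochhammer_eval_neg_eq_descPochhammer, descPochhammer_eval_eq_descFactorial]

theorem Nat.choose_mul_descFactorial_comm (m n k : ℕ) :
    n.choose k * m.descFactorial k = m.choose k * n.descFactorial k := by
  simp only [Nat.descFactorial_eq_factorial_mul_choose]
  ring

theorem pow_mul_skyburst_natCast (m n : ℕ) (z : ℂ) :
    z ^ m * skyburst n m z =
      ∑ ℓ ∈ range (m + n + 1), ((n.choose ℓ * m.descFactorial ℓ : ℕ) : ℂ) *
        ((-1) ^ ℓ / (ascPochhammer ℂ ℓ).eval (-((m + n : ℕ) : ℂ))) * z ^ (m + n - ℓ) := by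
  have hsub : range (n + 1) ⊆ range (m + n + 1) := range_subset_range.mpr (by omega)
  rw [skyburst, mul_sum, ← sum_subset hsub]
  · refine sum_congr rfl fun ℓ hℓ => ?_
    have hℓn : ℓ ≤ n := Nat.lt_succ_iff.mp (mem_range.mp hℓ)
    have hden : -(n : ℂ) - ((m : ℝ) : ℂ) = -((m + n : ℕ) : ℂ) := by push_cast; ring
    have hpow : z ^ (m + n - ℓ) = z ^ m * z ^ (n - ℓ) := by
      rw [← pow_add, Nat.add_sub_assoc hℓn]
    rw [hden, Complex.ofReal_natCast, ascPochhammer_eval_neg_natCast, hpow]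
    push_cast
    ring
  · intro ℓ _ hℓ
    rw [Nat.choose_eq_zero_of_lt (by simpa using hℓ)]
    simp

theorem skyburst_param_degree_symmetry (m n : ℕ) (z : ℂ) :
    z ^ m * skyburst n (m : ℝ) z = z ^ n * skyburst m (n : ℝ) z := by
  rw [pow_mul_skyburst_natCast, pow_mul_skyburst_natCast, Nat.add_comm n m]
  refine sum_congr rfl fun ℓ _ => ?_
  rw [Nat.choose_mul_descFactorial_comm]
end

section
/- Let ω > 0 be a real number and let z, T ∈ ℂ satisfy |T| < 1 and |zT| < 1. Then the series Σ_{n=0}^∞ ((1+ω)_n/n!) S_n^ω(z) T^n converges and its sum equals (1+T)^ω/(1−zT)^{ω+1}, where the complex powers are taken with the principal branch (well defined since Re(1+T) > 0 and Re(1−zT) > 0). -/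
/-!
Both factors are binomial series: `(1 + T)^ω = Σ C(ω, k) T^k` and
`(1 - zT)^(-ω-1) = Σ C(ω + l, l) (zT)^l`, absolutely convergent for `|T| < 1` and `|zT| < 1`.
Their Cauchy product has `n`-th term `Σ_{k+l=n} C(ω, k) C(ω + l, l) z^l T^n`, and this is
`((1+ω)_n / n!) S_n^ω(z) T^n` by the Pochhammer identities `(1+ω)_{k+l} = (1+ω)_l (1+ω+l)_k` and
`(-(k+l)-ω)_k = (-1)^k (1+ω+l)_k`, which cancel the denominators of the skyburst coefficients.
-/

open Finset Polynomial

theorem Ring.choose_eq_ascPochhammer_eval_div {K : Type*} [Field K] [CharZero K] (a : K) (n : ℕ) :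
    Ring.choose a n = (ascPochhammer K n).eval (a - n + 1) / n.factorial := by
  rw [Ring.choose_eq_smul, descPochhammer_smeval_eq_ascPochhammer, ascPochhammer_smeval_eq_eval,
    smul_eq_mul, inv_mul_eq_div]

theorem ascPochhammer_eval_mul_eval_add {R : Type*} [CommSemiring R] (r : R) (m n : ℕ) :
    (ascPochhammer R m).eval r * (ascPochhammer R n).eval (r + m) =
      (ascPochhammer R (m + n)).eval r := by
  rw [← ascPochhammer_mul, eval_mul, eval_comp, eval_add, eval_X, eval_natCast]

theorem ascPochhammer_eval_neg_sub {R : Type*} [CommRing R] (r : R) (k : ℕ) :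
    (ascPochhammer R k).eval (-r) = (-1) ^ k * (ascPochhammer R k).eval (r - k + 1) := by
  rw [ascPochhammer_eval_neg_eq_descPochhammer, descPochhammer_eval_eq_ascPochhammer]

theorem ascPochhammer_div_factorial_mul_choose_mul_div {K : Type*} [Field K] [CharZero K]
    (a : K) (k l : ℕ) (h : (ascPochhammer K k).eval (-((k + l : ℕ) : K) - a) ≠ 0) :
    (ascPochhammer K (k + l)).eval (1 + a) / (k + l).factorial *
        ((k + l).choose k * ((ascPochhammer K k).eval (-a) /
          (ascPochhammer K k).eval (-((k + l : ℕ) : K) - a))) =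
      Ring.choose a k * Ring.choose (a + l) l := by
  have hsplit : (ascPochhammer K (k + l)).eval (1 + a) =
      (ascPochhammer K l).eval (1 + a) * (ascPochhammer K k).eval (1 + a + l) := by
    rw [ascPochhammer_eval_mul_eval_add, add_comm l]
  have hden : (ascPochhammer K k).eval (-((k + l : ℕ) : K) - a) =
      (-1) ^ k * (ascPochhammer K k).eval (1 + a + l) := by
    rw [← neg_add', ascPochhammer_eval_neg_sub]
    push_cast
    ring_nf
  have hfact : ((k + l).choose k : K) * k.factorial * l.factorial = (k + l).factorial := by
    rw [Nat.choose_symm_add]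
    exact_mod_cast Nat.add_choose_mul_factorial_mul_factorial k l
  have hchoose : ((k + l).choose k : K) ≠ 0 :=
    Nat.cast_ne_zero.2 (Nat.choose_pos le_self_add).ne'
  rw [hden] at h ⊢
  have hpoch := right_ne_zero_of_mul h
  rw [Ring.choose_eq_ascPochhammer_eval_div, Ring.choose_eq_ascPochhammer_eval_div,
    ascPochhammer_eval_neg_sub, hsplit, ← hfact, add_sub_cancel_right, add_comm a 1]
  field_simp

theorem ascPochhammer_eval_neg_natCast_sub_ne_zero {ω : ℝ} (hω : -1 < ω) {k n : ℕ}
    (hk : k ≤ n) : (ascPochhammer ℂ k).eval (-(n : ℂ) - ω) ≠ 0 := by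
  rw [Ne, ascPochhammer_eval_eq_zero_iff]
  rintro ⟨j, hjk, hj⟩
  have hre := congrArg Complex.re hj
  have hjn : (j : ℝ) + 1 ≤ n := by exact_mod_cast hjk.trans_le hk
  simp only [Complex.natCast_re, neg_sub, sub_neg_eq_add, Complex.add_re,
    Complex.ofReal_re] at hre
  linarith

theorem skyburst_term_eq_sum_antidiagonal {ω : ℝ} (hω : -1 < ω) (n : ℕ) (z T : ℂ) :
    (ascPochhammer ℂ n).eval (1 + (ω : ℂ)) / n.factorial * skyburst n ω z * T ^ n =
      ∑ kl ∈ antidiagonal n,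
        Ring.choose (ω : ℂ) kl.1 * T ^ kl.1 *
          (Ring.choose ((ω : ℂ) + kl.2) kl.2 * (z * T) ^ kl.2) := by
  rw [skyburst, mul_sum, sum_mul, Nat.sum_antidiagonal_eq_sum_range_succ
    (fun k l => Ring.choose (ω : ℂ) k * T ^ k * (Ring.choose ((ω : ℂ) + l) l * (z * T) ^ l))]
  refine sum_congr rfl fun k hk => ?_
  obtain ⟨l, rfl⟩ := Nat.exists_eq_add_of_le (mem_range_succ_iff.1 hk)
  rw [Nat.add_sub_cancel_left]
  linear_combination (z ^ l * T ^ (k + l)) * ascPochhammer_div_factorial_mul_choose_mul_div _ k l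
    (ascPochhammer_eval_neg_natCast_sub_ne_zero hω le_self_add)

theorem HasSum.mul_antidiagonal_of_summable_norm {R : Type*} [NormedRing R] [CompleteSpace R]
    {f g : ℕ → R} {a b : R} (hf : HasSum f a) (hg : HasSum g b)
    (hf' : Summable fun n => ‖f n‖) (hg' : Summable fun n => ‖g n‖) :
    HasSum (fun n => ∑ kl ∈ antidiagonal n, f kl.1 * g kl.2) (a * b) := by
  rw [← hf.tsum_eq, ← hg.tsum_eq, tsum_mul_tsum_eq_tsum_sum_antidiagonal_of_summable_norm hf' hg']
  exact (summable_norm_sum_mul_antidiagonal_of_summable_norm hf' hg').of_norm.hasSum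

section OfScalars

variable {𝕜 : Type*} [NontriviallyNormedField 𝕜] {f : 𝕜 → 𝕜} {c : ℕ → 𝕜} {r : ENNReal}

theorem HasFPowerSeriesOnBall.hasSum_ofScalars
    (hf : HasFPowerSeriesOnBall f (FormalMultilinearSeries.ofScalars 𝕜 c) 0 r) {x : 𝕜}
    (hx : x ∈ Metric.eball 0 r) : HasSum (fun n => c n * x ^ n) (f x) := by
  simpa [FormalMultilinearSeries.ofScalars_apply_eq, mul_comm] using hf.hasSum hx

theorem HasFPowerSeriesOnBall.summable_norm_ofScalars
    (hf : HasFPowerSeriesOnBall f (FormalMultilinearSeries.ofScalars 𝕜 c) 0 r) {x : 𝕜}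
    (hx : x ∈ Metric.eball 0 r) : Summable fun n => ‖c n * x ^ n‖ := by
  simpa [FormalMultilinearSeries.ofScalars_apply_eq, mul_comm] using
    FormalMultilinearSeries.summable_norm_apply _ (Metric.eball_subset_eball hf.r_le hx)

end OfScalars

theorem mem_eball_zero_one_of_norm_lt_one {E : Type*} [SeminormedAddCommGroup E] {x : E}
    (hx : ‖x‖ < 1) : x ∈ Metric.eball (0 : E) 1 := by
  simpa [← ENNReal.ofReal_one, Metric.eball_ofReal] using hx

namespace Complex

theorem hasSum_choose_mul_pow (a : ℂ) {x : ℂ} (hx : ‖x‖ < 1) :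
    HasSum (fun n => Ring.choose a n * x ^ n) ((1 + x) ^ a) :=
  one_add_cpow_hasFPowerSeriesOnBall_zero.hasSum_ofScalars (mem_eball_zero_one_of_norm_lt_one hx)

theorem summable_norm_choose_mul_pow (a : ℂ) {x : ℂ} (hx : ‖x‖ < 1) :
    Summable fun n => ‖Ring.choose a n * x ^ n‖ :=
  one_add_cpow_hasFPowerSeriesOnBall_zero.summable_norm_ofScalars
    (mem_eball_zero_one_of_norm_lt_one hx)

theorem hasSum_choose_add_mul_pow (a : ℂ) {x : ℂ} (hx : ‖x‖ < 1) :
    HasSum (fun n : ℕ => Ring.choose (a + n) n * x ^ n) (1 / (1 - x) ^ (a + 1)) := by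
  have hshift (n : ℕ) : a + 1 + n - 1 = a + n := by ring
  simpa [hshift] using (one_div_one_sub_cpow_hasFPowerSeriesOnBall_zero (a + 1)).hasSum_ofScalars
    (mem_eball_zero_one_of_norm_lt_one hx)

theorem summable_norm_choose_add_mul_pow (a : ℂ) {x : ℂ} (hx : ‖x‖ < 1) :
    Summable fun n : ℕ => ‖Ring.choose (a + n) n * x ^ n‖ := by
  have hshift (n : ℕ) : a + 1 + n - 1 = a + n := by ring
  simpa [hshift] using
    (one_div_one_sub_cpow_hasFPowerSeriesOnBall_zero (a + 1)).summable_norm_ofScalars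
      (mem_eball_zero_one_of_norm_lt_one hx)

end Complex

theorem skyburst_generating_function (ω : ℝ) (hω : 0 < ω) (z T : ℂ)
    (hT : ‖T‖ < 1) (hzT : ‖z * T‖ < 1) :
    HasSum
      (fun n : ℕ =>
        ((ascPochhammer ℂ n).eval (1 + (ω : ℂ)) / (n.factorial : ℂ)) * skyburst n ω z * T ^ n)
      ((1 + T) ^ (ω : ℂ) / (1 - z * T) ^ ((ω : ℂ) + 1)) := by
  have hprod := (Complex.hasSum_choose_mul_pow ω hT).mul_antidiagonal_of_summable_norm
    (Complex.hasSum_choose_add_mul_pow ω hzT) (Complex.summable_norm_choose_mul_pow ω hT)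
    (Complex.summable_norm_choose_add_mul_pow ω hzT)
  rw [mul_one_div] at hprod
  simpa only [skyburst_term_eq_sum_antidiagonal (by linarith : -1 < ω)] using hprod
end

section
/- Let ω > 0 be a real number and n ∈ ℕ. Then S_n^ω(−1) = (−1)^n · n!/(1+ω)_n; in particular S_n^ω(−1) ≠ 0. -/
open Finset Polynomial

section CommRing

variable {R : Type*} [CommRing R]

theorem descPochhammer_int_smeval_eq_eval (k : ℕ) (x : R) :
    (descPochhammer ℤ k).smeval x = (descPochhammer R k).eval x := by
  rw [← aeval_eq_smeval, aeval_def, ← eval_map, descPochhammer_map]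

theorem ascPochhammer_eval_add (n : ℕ) (a b : R) :
    (ascPochhammer R n).eval (a + b) = ∑ ij ∈ antidiagonal n,
      n.choose ij.1 * ((ascPochhammer R ij.1).eval a * (ascPochhammer R ij.2).eval b) := by
  have asc_eq (k : ℕ) (x : R) :
      (ascPochhammer R k).eval x = (-1) ^ k * (descPochhammer R k).eval (-x) := by
    simpa using ascPochhammer_eval_neg_eq_descPochhammer R (-x) k
  have h := Ring.descPochhammer_smeval_add (r := -a) (s := -b) n (Commute.all _ _)
  simp only [descPochhammer_int_smeval_eq_eval, ← neg_add] at h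
  rw [asc_eq, h, mul_sum]
  refine sum_congr rfl fun ij hij => ?_
  rw [← mem_antidiagonal.mp hij, asc_eq, asc_eq]
  ring

theorem ascPochhammer_eval_neg_natCast_sub (i : ℕ) (r : R) :
    (ascPochhammer R i).eval (-(i : R) - r) = (-1) ^ i * (ascPochhammer R i).eval (r + 1) := by
  rw [neg_sub_left, ascPochhammer_eval_neg_eq_descPochhammer, descPochhammer_eval_eq_ascPochhammer,
    add_sub_cancel_right]

theorem ascPochhammer_add_eval (i j : ℕ) (r : R) :
    (ascPochhammer R (i + j)).eval r
      = (ascPochhammer R i).eval r * (ascPochhammer R j).eval (r + i) := by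
  rw [← ascPochhammer_mul, eval_mul, eval_comp, eval_add, eval_X, eval_natCast]

end CommRing

section Field

variable {K : Type*} [Field K]

theorem sum_choose_mul_ascPochhammer_div_mul_neg_one_pow (n : ℕ) (w : K)
    (hw : (ascPochhammer K n).eval (1 + w) ≠ 0) :
    ∑ ℓ ∈ range (n + 1), (n.choose ℓ : K) *
        ((ascPochhammer K ℓ).eval (-w) / (ascPochhammer K ℓ).eval (-(n : K) - w)) * (-1) ^ (n - ℓ)
      = (-1) ^ n * n.factorial / (ascPochhammer K n).eval (1 + w) := by
  rw [← Nat.sum_antidiagonal_eq_sum_range_succ (fun i j => (n.choose i : K) *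
    ((ascPochhammer K i).eval (-w) / (ascPochhammer K i).eval (-(n : K) - w)) * (-1) ^ j)]
  calc _ = ∑ ij ∈ antidiagonal n, (-1) ^ n / (ascPochhammer K n).eval (1 + w) *
          (n.choose ij.1 *
            ((ascPochhammer K ij.1).eval (-w) * (ascPochhammer K ij.2).eval (1 + w))) := by
        refine sum_congr rfl fun ⟨i, j⟩ hij => ?_
        obtain rfl : i + j = n := mem_antidiagonal.mp hij
        have hsplit := ascPochhammer_add_eval j i (1 + w)
        have hrefl : (ascPochhammer K i).eval (-((i + j : ℕ) : K) - w)
            = (-1) ^ i * (ascPochhammer K i).eval (1 + w + j) := by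
          rw [show -((i + j : ℕ) : K) - w = -(i : K) - (w + j) by push_cast; ring,
            ascPochhammer_eval_neg_natCast_sub]
          ring_nf
        rw [add_comm j] at hsplit
        rw [hsplit] at hw ⊢
        obtain ⟨hj, hi⟩ := mul_ne_zero_iff.mp hw
        rw [hrefl]
        field_simp
        have hsign : ((-1 : K)) ^ i * (-1) ^ (i + j) = (-1) ^ j := by
          rw [← pow_add, ← add_assoc, ← two_mul, pow_add, pow_mul, neg_one_sq, one_pow, one_mul]
        rw [mul_assoc _ _ ((-1) ^ (i + j)), hsign]
    _ = (-1) ^ n / (ascPochhammer K n).eval (1 + w) * n.factorial := by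
        rw [← mul_sum, ← ascPochhammer_eval_add, show -w + (1 + w) = 1 by ring,
          ascPochhammer_eval_one]
    _ = _ := by ring

end Field

theorem ascPochhammer_eval_ne_zero_of_re_pos (n : ℕ) {z : ℂ} (hz : 0 < z.re) :
    (ascPochhammer ℂ n).eval z ≠ 0 := by
  rw [Ne, ascPochhammer_eval_eq_zero_iff]
  rintro ⟨k, -, hk⟩
  have hre := congrArg Complex.re hk
  simp only [Complex.natCast_re, Complex.neg_re] at hre
  linarith [k.cast_nonneg (α := ℝ)]

theorem skyburst_at_neg_one (ω : ℝ) (hω : 0 < ω) (n : ℕ) :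
    skyburst n ω (-1) = (-1 : ℂ) ^ n * (n.factorial : ℂ) / (ascPochhammer ℂ n).eval (1 + (ω : ℂ))
      ∧ skyburst n ω (-1) ≠ 0 := by
  have hre : 0 < (1 + (ω : ℂ)).re := by
    simp only [Complex.add_re, Complex.one_re, Complex.ofReal_re]
    linarith
  have hden := ascPochhammer_eval_ne_zero_of_re_pos n hre
  have hval : skyburst n ω (-1) = (-1 : ℂ) ^ n * (n.factorial : ℂ) /
      (ascPochhammer ℂ n).eval (1 + (ω : ℂ)) :=
    sum_choose_mul_ascPochhammer_div_mul_neg_one_pow n (ω : ℂ) hden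
  refine ⟨hval, hval ▸ div_ne_zero (mul_ne_zero ?_ ?_) hden⟩
  · exact pow_ne_zero n (neg_ne_zero.mpr one_ne_zero)
  · exact_mod_cast n.factorial_ne_zero
end

section
/- Let ω > 0 be a real number and n ∈ ℕ. Then for every z ∈ ℂ, S_n^ω(z) = ((−1)^n n!/(1+ω)_n) · Σ_{m=0}^n (−1)^m binom(n,m) ((1+ω)_m/m!) (1+z)^m; that is, S_n^ω(z) = ((−1)^n n!/(1+ω)_n) · ₂F₁(−n, 1+ω; 1; 1+z). -/
/-! With `x = -(1 + ω)`, every Pochhammer symbol on either side is a generalized binomial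
coefficient: `(a)_m = m! * binom(a + m - 1, m) = (-1)^m * m! * binom(-a, m)`. Expanding
`(1 + z)^m`, the coefficient of `z^k` on the right becomes
`binom(x, n)⁻¹ * Σ_m C(n, m) C(m, k) binom(x, m)`, which trinomial revision and
Chu–Vandermonde reduce to `binom(x, k) * binom(x + n - k, n - k) / binom(x, n)`.
One more trinomial revision, `C(n, k) * binom(x, n) = binom(x, k) * binom(x - k, n - k)`,
identifies this with the coefficient `C(n, k) * binom(x + n - k, n - k) / binom(x - k, n - k)`
of the skyburst polynomial. -/

open Finset Polynomial

theorem one_add_pow_eq_sum_range_of_le {R : Type*} [CommSemiring R] (z : R) {m n : ℕ}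
    (hmn : m ≤ n) :
    (1 + z) ^ m = ∑ k ∈ range (n + 1), (m.choose k : R) * z ^ k := by
  rw [add_comm, add_pow]
  refine (sum_subset (range_subset_range.2 (by omega)) fun k _ hk => ?_).trans
    (sum_congr rfl fun k _ => by rw [one_pow, mul_one, mul_comm])
  rw [Nat.choose_eq_zero_of_lt (by simpa using hk)]
  simp

theorem sum_mul_one_add_pow {R : Type*} [CommSemiring R] (g : ℕ → R) (z : R) (n : ℕ) :
    ∑ m ∈ range (n + 1), g m * (1 + z) ^ m =
      ∑ k ∈ range (n + 1), (∑ m ∈ range (n + 1), g m * m.choose k) * z ^ k := by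
  rw [sum_congr rfl fun m hm => by
    rw [one_add_pow_eq_sum_range_of_le z (Nat.lt_succ_iff.1 (mem_range.1 hm))]]
  simp_rw [mul_sum, sum_mul]
  rw [sum_comm]
  simp only [mul_assoc]

section BinomialRing

variable {R : Type*} [CommRing R] [BinomialRing R]

theorem ascPochhammer_eval_eq_factorial_mul_choose (a : R) (m : ℕ) :
    (ascPochhammer R m).eval a = m.factorial * Ring.choose (a + m - 1) m := by
  rw [← ascPochhammer_smeval_eq_eval, ← Ring.factorial_nsmul_multichoose_eq_ascPochhammer,
    Ring.multichoose_eq, nsmul_eq_mul]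

theorem ascPochhammer_eval_eq_neg_one_pow_mul_factorial_mul_choose_neg (a : R) (m : ℕ) :
    (ascPochhammer R m).eval a = (-1) ^ m * m.factorial * Ring.choose (-a) m := by
  rw [ascPochhammer_eval_eq_factorial_mul_choose, Ring.choose_neg, Units.smul_def,
    Int.coe_negOnePow_natCast, zsmul_eq_mul, mul_mul_mul_comm, ← mul_assoc, Int.cast_pow,
    Int.cast_neg, Int.cast_one, ← mul_pow]
  simp

theorem Ring.choose_add_natCast (y : R) (n N : ℕ) :
    Ring.choose (y + n) N = ∑ i ∈ range (N + 1), Ring.choose y i * (n.choose (N - i) : R) := by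
  rw [Ring.add_choose_eq N (Commute.all y n), Nat.sum_antidiagonal_eq_sum_range_succ
    (fun i j => Ring.choose y i * Ring.choose (n : R) j)]
  simp only [Ring.choose_natCast]

theorem sum_choose_mul_choose_mul_choose (x : R) {n k : ℕ} (hk : k ≤ n) :
    ∑ m ∈ range (n + 1), (n.choose m : R) * Ring.choose x m * (m.choose k : R) =
      Ring.choose x k * Ring.choose (x + (n - k : ℕ)) (n - k) := by
  obtain ⟨N, rfl⟩ := Nat.exists_eq_add_of_le hk
  rw [show k + N + 1 = k + (N + 1) by omega, sum_range_add, Nat.add_sub_cancel_left,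
    show x + N = x - k + (k + N : ℕ) by push_cast; ring, Ring.choose_add_natCast, mul_sum,
    sum_eq_zero fun m hm => by
      rw [Nat.choose_eq_zero_of_lt (mem_range.1 hm), Nat.cast_zero, mul_zero], zero_add]
  refine sum_congr rfl fun j hj => ?_
  have hjN : j ≤ N := Nat.lt_succ_iff.1 (mem_range.1 hj)
  have hrev := Ring.choose_smul_choose x (Nat.le_add_right k j)
  rw [Nat.add_sub_cancel_left, nsmul_eq_mul] at hrev
  rw [Nat.choose_symm_of_eq_add (by omega : k + N = k + j + (N - j))]
  linear_combination ((k + N).choose (N - j) : R) * hrev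

end BinomialRing

section Field

variable {K : Type*} [Field K] [CharZero K]

theorem hypergeometric_eq_sum_choose_mul_pow (a z : K) (n : ℕ) :
    ((-1) ^ n * n.factorial / (ascPochhammer K n).eval a) *
        ∑ m ∈ range (n + 1),
          (-1) ^ m * (n.choose m : K) * ((ascPochhammer K m).eval a / m.factorial) * (1 + z) ^ m =
      (Ring.choose (-a) n)⁻¹ * ∑ k ∈ range (n + 1),
        Ring.choose (-a) k * Ring.choose (-a + (n - k : ℕ)) (n - k) * z ^ k := by
  simp only [ascPochhammer_eval_eq_neg_one_pow_mul_factorial_mul_choose_neg]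
  rw [div_mul_cancel_left₀ (by simp [Nat.factorial_ne_zero])]
  congr 1
  have hterm (m : ℕ) : (-1) ^ m * (n.choose m : K) *
      ((-1) ^ m * m.factorial * Ring.choose (-a) m / m.factorial) * (1 + z) ^ m =
        (n.choose m : K) * Ring.choose (-a) m * (1 + z) ^ m := by
    have hsq : (-1 : K) ^ m * (-1) ^ m = 1 := by rw [← mul_pow]; simp
    rw [mul_right_comm _ (m.factorial : K),
      mul_div_cancel_right₀ _ (Nat.cast_ne_zero.2 m.factorial_ne_zero)]
    linear_combination (n.choose m : K) * Ring.choose (-a) m * (1 + z) ^ m * hsq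
  simp only [hterm, sum_mul_one_add_pow]
  refine sum_congr rfl fun k hk => ?_
  rw [sum_choose_mul_choose_mul_choose _ (Nat.lt_succ_iff.1 (mem_range.1 hk))]

theorem choose_mul_choose_div_choose_eq (x : K) {n k : ℕ} (hk : k ≤ n)
    (hx : Ring.choose x n ≠ 0) :
    (n.choose k : K) * (Ring.choose (x + (n - k : ℕ)) (n - k) / Ring.choose (x - k) (n - k)) =
      (Ring.choose x n)⁻¹ * (Ring.choose x k * Ring.choose (x + (n - k : ℕ)) (n - k)) := by
  have hrev := Ring.choose_smul_choose x hk
  rw [nsmul_eq_mul] at hrev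
  have hne : Ring.choose (x - k) (n - k) ≠ 0 := by
    refine right_ne_zero_of_mul (hrev ▸ mul_ne_zero ?_ hx)
    exact_mod_cast (Nat.choose_pos hk).ne'
  field_simp
  linear_combination Ring.choose (x + (n - k : ℕ)) (n - k) * hrev

end Field

theorem skyburst_eq_sum_choose_mul_pow (n : ℕ) (ω : ℝ) (z : ℂ) :
    skyburst n ω z = ∑ k ∈ range (n + 1), (n.choose k : ℂ) *
      (Ring.choose (-(1 + (ω : ℂ)) + (n - k : ℕ)) (n - k) /
        Ring.choose (-(1 + (ω : ℂ)) - k) (n - k)) * z ^ k := by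
  rw [skyburst, ← sum_range_reflect]
  refine sum_congr rfl fun k hk => ?_
  have hkn : k ≤ n := Nat.lt_succ_iff.1 (mem_range.1 hk)
  simp only [ascPochhammer_eval_eq_factorial_mul_choose]
  rw [Nat.add_sub_cancel, Nat.sub_sub_self hkn, Nat.choose_symm hkn,
    mul_div_mul_left _ _ (Nat.cast_ne_zero.2 (n - k).factorial_ne_zero),
    show -(ω : ℂ) + (n - k : ℕ) - 1 = -(1 + ω) + (n - k : ℕ) by ring,
    show -(n : ℂ) - ω + (n - k : ℕ) - 1 = -(1 + ω) - k by push_cast [Nat.cast_sub hkn]; ring]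

theorem skyburst_hypergeometric_form (ω : ℝ) (hω : 0 < ω) (n : ℕ) (z : ℂ) :
    skyburst n ω z =
      ((-1 : ℂ) ^ n * (n.factorial : ℂ) / (ascPochhammer ℂ n).eval (1 + (ω : ℂ))) *
        ∑ m ∈ Finset.range (n + 1),
          (-1 : ℂ) ^ m * (n.choose m : ℂ) *
            ((ascPochhammer ℂ m).eval (1 + (ω : ℂ)) / (m.factorial : ℂ)) * (1 + z) ^ m := by
  have hpoch : (ascPochhammer ℂ n).eval (1 + (ω : ℂ)) ≠ 0 := by
    rw [Ne, ascPochhammer_eval_eq_zero_iff]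
    rintro ⟨k, -, hk⟩
    have hre := congrArg Complex.re hk
    simp only [Complex.natCast_re, Complex.neg_re, Complex.add_re, Complex.one_re,
      Complex.ofReal_re] at hre
    linarith [(k.cast_nonneg : (0 : ℝ) ≤ k)]
  have hx : Ring.choose (-(1 + (ω : ℂ))) n ≠ 0 := right_ne_zero_of_mul
    (ascPochhammer_eval_eq_neg_one_pow_mul_factorial_mul_choose_neg (1 + (ω : ℂ)) n ▸ hpoch)
  rw [skyburst_eq_sum_choose_mul_pow, hypergeometric_eq_sum_choose_mul_pow, mul_sum]
  refine sum_congr rfl fun k hk => ?_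
  rw [choose_mul_choose_div_choose_eq _ (Nat.lt_succ_iff.1 (mem_range.1 hk)) hx, mul_assoc]
end

section
/- Let ω > 0 be a real number and n ∈ ℕ. Then for every z ∈ ℂ, ((2+ω)_n/n!)·S_n^{ω+1}(z) = ((1+ω)_n/n!)·S_n^ω(z) + (1+z)·Σ_{ℓ=0}^{n−1} ((1+ω)_ℓ/ℓ!) z^{n−ℓ−1} S_ℓ^ω(z). -/
open Finset Polynomial

/-!
After normalisation the skyburst polynomials have generalised binomial coefficients,
`((1 + x)_n / n!) S_n^x(z) = Σ_ℓ C(x, ℓ) C(x + n - ℓ, n - ℓ) z^(n - ℓ)`,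
which is the coefficient of `t^n` in `(1 + t)^x (1 - z t)^(-x - 1)`. Replacing `x` by `x + 1`
multiplies this series by `(1 + t) / (1 - z t) = 1 + (1 + z) t / (1 - z t)`, and reading off the
coefficient of `t^n` gives the recurrence.
-/

open scoped PowerSeries

section Pochhammer

theorem ascPochhammer_eval_dvd_of_le {S : Type*} [CommSemiring S] {ℓ n : ℕ} (h : ℓ ≤ n)
    (r : S) : (ascPochhammer S ℓ).eval r ∣ (ascPochhammer S n).eval r := by
  obtain ⟨k, rfl⟩ := Nat.exists_eq_add_of_le h
  rw [← ascPochhammer_mul, eval_mul]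
  exact dvd_mul_right _ _

variable {K : Type*} [Field K] [CharZero K]

theorem descPochhammer_eval_eq_factorial_mul_choose (r : K) (m : ℕ) :
    (descPochhammer K m).eval r = m.factorial * Ring.choose r m := by
  rw [Ring.choose_eq_smul, smul_eq_mul,
    mul_inv_cancel_left₀ (by exact_mod_cast m.factorial_ne_zero), ← aeval_eq_smeval, aeval_def,
    ← eval_map, descPochhammer_map]

theorem ascPochhammer_eval_add_one_eq_factorial_mul_choose (r : K) (m : ℕ) :
    (ascPochhammer K m).eval (r + 1) = m.factorial * Ring.choose (r + m) m := by
  rw [← descPochhammer_eval_eq_factorial_mul_choose, descPochhammer_eval_eq_ascPochhammer,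
    add_sub_cancel_right]

theorem ascPochhammer_eval_neg_eq_factorial_mul_choose (r : K) (m : ℕ) :
    (ascPochhammer K m).eval (-r) = (-1) ^ m * m.factorial * Ring.choose r m := by
  rw [ascPochhammer_eval_neg_eq_descPochhammer, descPochhammer_eval_eq_factorial_mul_choose,
    mul_assoc]

theorem normalized_skyburst_coeff_eq_choose_mul_choose (x : K) {n ℓ : ℕ} (hℓ : ℓ ≤ n)
    (h : (ascPochhammer K ℓ).eval (-n - x) ≠ 0) :
    (ascPochhammer K n).eval (1 + x) / n.factorial *
        (n.choose ℓ * ((ascPochhammer K ℓ).eval (-x) / (ascPochhammer K ℓ).eval (-n - x))) =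
      Ring.choose x ℓ * Ring.choose (x + (n - ℓ : ℕ)) (n - ℓ) := by
  have hsplit : n.choose ℓ * Ring.choose (x + n) n =
      Ring.choose (x + n) ℓ * Ring.choose (x + (n - ℓ : ℕ)) (n - ℓ) := by
    rw [← nsmul_eq_mul, Ring.choose_smul_choose _ hℓ, Nat.cast_sub hℓ, add_sub_assoc]
  rw [show -(n : K) - x = -(x + n) by ring, ascPochhammer_eval_neg_eq_factorial_mul_choose] at h ⊢
  rw [add_comm 1 x, ascPochhammer_eval_add_one_eq_factorial_mul_choose,
    ascPochhammer_eval_neg_eq_factorial_mul_choose]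
  have hc : Ring.choose (x + n) ℓ ≠ 0 := right_ne_zero_of_mul h
  rw [mul_div_mul_left _ _ (left_ne_zero_of_mul h)]
  have hf : (n.factorial : K) ≠ 0 := by exact_mod_cast n.factorial_ne_zero
  field_simp
  linear_combination Ring.choose x ℓ * hsplit

end Pochhammer

section Series

variable {K : Type*} [Field K] [CharZero K]

/-- `(1 + t) ^ x (1 - z t) ^ (-x - 1)`, the generating function of the normalised polynomials
`((1 + x)_n / n!) S_n^x(z)`. -/
noncomputable def skyburstSeries (x z : K) : K⟦X⟧ :=
  PowerSeries.binomialSeries K x * PowerSeries.rescale (-z) (PowerSeries.binomialSeries K (-x - 1))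

theorem coeff_rescale_binomialSeries_neg_sub_one (x z : K) (m : ℕ) :
    PowerSeries.coeff m (PowerSeries.rescale (-z) (PowerSeries.binomialSeries K (-x - 1))) =
      Ring.choose (x + m) m * z ^ m := by
  rw [PowerSeries.coeff_rescale, PowerSeries.binomialSeries_coeff, smul_eq_mul, mul_one,
    show -x - 1 = -(x + 1) by ring, Ring.choose_neg, Units.smul_def, zsmul_eq_mul,
    Int.cast_negOnePow_natCast, neg_pow, add_right_comm, add_sub_cancel_right, mul_mul_mul_comm,
    ← mul_pow, neg_one_mul, neg_neg, one_pow, one_mul, mul_comm]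

theorem coeff_skyburstSeries (x z : K) (n : ℕ) :
    PowerSeries.coeff n (skyburstSeries x z) = ∑ ℓ ∈ range (n + 1),
      Ring.choose x ℓ * (Ring.choose (x + (n - ℓ : ℕ)) (n - ℓ) * z ^ (n - ℓ)) := by
  simp only [skyburstSeries, PowerSeries.coeff_mul, Nat.sum_antidiagonal_eq_sum_range_succ_mk,
    PowerSeries.binomialSeries_coeff, smul_eq_mul, mul_one,
    coeff_rescale_binomialSeries_neg_sub_one]

theorem coeff_rescale_binomialSeries_neg_one (z : K) (m : ℕ) :
    PowerSeries.coeff m (PowerSeries.rescale (-z) (PowerSeries.binomialSeries K (-1 : K))) =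
      z ^ m := by
  simpa [Ring.choose_natCast] using coeff_rescale_binomialSeries_neg_sub_one (0 : K) z m

theorem skyburstSeries_add_one (x z : K) :
    skyburstSeries (x + 1) z = skyburstSeries x z + PowerSeries.C (1 + z) * PowerSeries.X *
      (skyburstSeries x z * PowerSeries.rescale (-z) (PowerSeries.binomialSeries K (-1 : K))) := by
  set G := PowerSeries.rescale (-z) (PowerSeries.binomialSeries K (-1 : K))
  have hB1 : PowerSeries.binomialSeries K (1 : K) = 1 + PowerSeries.X := by
    simpa using PowerSeries.binomialSeries_nat (A := K) (R := K) 1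
  have hG : (1 - PowerSeries.C z * PowerSeries.X) * G = 1 := by
    have h := congrArg (PowerSeries.rescale (-z))
      (PowerSeries.binomialSeries_add (A := K) (1 : K) (-1))
    rw [add_neg_cancel, PowerSeries.binomialSeries_zero, map_one, map_mul, hB1, map_add, map_one,
      PowerSeries.rescale_X, map_neg] at h
    linear_combination -h
  rw [skyburstSeries, skyburstSeries, show -(x + 1) - 1 = (-x - 1) + -1 by ring,
    PowerSeries.binomialSeries_add, PowerSeries.binomialSeries_add, map_mul, hB1, map_add,
    map_one]
  linear_combination (PowerSeries.binomialSeries K x *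
    PowerSeries.rescale (-z) (PowerSeries.binomialSeries K (-x - 1))) * hG

theorem coeff_skyburstSeries_add_one (x z : K) (n : ℕ) :
    PowerSeries.coeff n (skyburstSeries (x + 1) z) = PowerSeries.coeff n (skyburstSeries x z) +
      (1 + z) * ∑ ℓ ∈ range n, PowerSeries.coeff ℓ (skyburstSeries x z) * z ^ (n - ℓ - 1) := by
  rw [skyburstSeries_add_one, map_add, mul_assoc, PowerSeries.coeff_C_mul]
  congr 2
  cases n with
  | zero => simp
  | succ m =>
    rw [PowerSeries.coeff_succ_X_mul, PowerSeries.coeff_mul,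
      Nat.sum_antidiagonal_eq_sum_range_succ_mk]
    refine sum_congr rfl fun ℓ _ => ?_
    rw [coeff_rescale_binomialSeries_neg_one, Nat.sub_right_comm, Nat.add_sub_cancel]

end Series

theorem ascPochhammer_eval_neg_natCast_sub_ne_zero_s12 {x : ℝ} (hx : -1 < x) (n : ℕ) :
    (ascPochhammer ℂ n).eval (-(n : ℂ) - x) ≠ 0 := by
  rw [Ne, ascPochhammer_eval_eq_zero_iff]
  rintro ⟨k, hk, hkx⟩
  have : (k : ℝ) = n + x := by exact_mod_cast (by rw [hkx]; ring : (k : ℂ) = n + x)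
  have : (k : ℝ) + 1 ≤ n := by exact_mod_cast hk
  linarith

theorem coeff_skyburstSeries_ofReal (ω : ℝ) (z : ℂ) {n : ℕ}
    (hω : (ascPochhammer ℂ n).eval (-(n : ℂ) - ω) ≠ 0) :
    PowerSeries.coeff n (skyburstSeries (ω : ℂ) z) =
      (ascPochhammer ℂ n).eval (1 + (ω : ℂ)) / n.factorial * skyburst n ω z := by
  rw [coeff_skyburstSeries, skyburst, mul_sum]
  refine sum_congr rfl fun ℓ hℓ => ?_
  have hℓn : ℓ ≤ n := Nat.lt_succ_iff.mp (mem_range.mp hℓ)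
  rw [← mul_assoc, ← mul_assoc, normalized_skyburst_coeff_eq_choose_mul_choose _ hℓn
    (ne_zero_of_dvd_ne_zero hω (ascPochhammer_eval_dvd_of_le hℓn _)), mul_assoc]

theorem skyburst_lifting_recurrence (ω : ℝ) (hω : 0 < ω) (n : ℕ) (z : ℂ) :
    ((ascPochhammer ℂ n).eval (2 + (ω : ℂ)) / (n.factorial : ℂ)) * skyburst n (ω + 1) z =
      ((ascPochhammer ℂ n).eval (1 + (ω : ℂ)) / (n.factorial : ℂ)) * skyburst n ω z +
        (1 + z) *
          ∑ ℓ ∈ Finset.range n,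
            ((ascPochhammer ℂ ℓ).eval (1 + (ω : ℂ)) / (ℓ.factorial : ℂ)) *
              z ^ (n - ℓ - 1) * skyburst ℓ ω z := by
  have hcoeff {m : ℕ} {x : ℝ} (hx : -1 < x) :
      (ascPochhammer ℂ m).eval (1 + (x : ℂ)) / m.factorial * skyburst m x z =
        PowerSeries.coeff m (skyburstSeries (x : ℂ) z) :=
    (coeff_skyburstSeries_ofReal x z (ascPochhammer_eval_neg_natCast_sub_ne_zero_s12 hx m)).symm
  have hω' : -1 < ω := by linarith
  rw [show 2 + (ω : ℂ) = 1 + ((ω + 1 : ℝ) : ℂ) by push_cast; ring, hcoeff (by linarith),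
    hcoeff hω', Complex.ofReal_add, Complex.ofReal_one, coeff_skyburstSeries_add_one]
  congr 2
  refine sum_congr rfl fun ℓ _ => ?_
  rw [mul_right_comm, hcoeff hω']
end

section
/- Let n ∈ ℕ and z ∈ ℂ. Then lim_{ω→+∞} S_n^ω(z) = (1+z)^n, where the limit is taken over real ω tending to +∞. -/
open Finset Polynomial

/-! Each Pochhammer ratio `(−ω)_ℓ / (−n−ω)_ℓ` is a product of `ℓ` factors `(x + a) / (x + b)` with
`x = −ω`, each tending to `1` as `|x| → ∞`; so `S_n^ω(z)` tends to `Σ binom(n,ℓ) z^{n−ℓ} = (1+z)^n`. -/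

open Filter Topology Bornology

theorem ascPochhammer_eval_eq_prod_range {R : Type*} [CommSemiring R] (n : ℕ) (r : R) :
    (ascPochhammer R n).eval r = ∏ j ∈ range n, (r + j) := by
  induction n with
  | zero => simp
  | succ n ih => rw [ascPochhammer_succ_eval, ih, prod_range_succ]

section NormedField

variable {𝕜 : Type*} [NormedField 𝕜]

theorem tendsto_add_div_add_cobounded (a b : 𝕜) :
    Tendsto (fun x => (x + a) / (x + b)) (cobounded 𝕜) (𝓝 1) := by
  have hinv : Tendsto (fun x => (x + b)⁻¹) (cobounded 𝕜) (𝓝 0) :=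
    tendsto_inv₀_cobounded.comp (tendsto_add_const_cobounded b)
  have hlim : Tendsto (fun x => 1 + (a - b) * (x + b)⁻¹) (cobounded 𝕜) (𝓝 1) := by
    simpa using (hinv.const_mul (a - b)).const_add 1
  refine hlim.congr' ?_
  filter_upwards [(tendsto_add_const_cobounded b).eventually_ne_cobounded 0] with x hx
  field_simp
  ring

theorem tendsto_ascPochhammer_eval_add_div_eval_add_cobounded (ℓ : ℕ) (a b : 𝕜) :
    Tendsto (fun x => (ascPochhammer 𝕜 ℓ).eval (x + a) / (ascPochhammer 𝕜 ℓ).eval (x + b))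
      (cobounded 𝕜) (𝓝 1) := by
  have hprod : Tendsto (fun x => ∏ j ∈ range ℓ, (x + (a + j)) / (x + (b + j)))
      (cobounded 𝕜) (𝓝 (∏ _j ∈ range ℓ, 1)) :=
    tendsto_finsetProd _ fun j _ => tendsto_add_div_add_cobounded _ _
  simp only [prod_const_one] at hprod
  refine hprod.congr fun x => ?_
  simp only [ascPochhammer_eval_eq_prod_range, ← prod_div_distrib, add_assoc]

end NormedField

theorem skyburst_limit_large_omega (n : ℕ) (z : ℂ) :
    Filter.Tendsto (fun ω : ℝ => skyburst n ω z) Filter.atTop (nhds ((1 + z) ^ n)) := by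
  have hx : Tendsto (fun ω : ℝ => -(ω : ℂ)) atTop (cobounded ℂ) :=
    tendsto_neg_cobounded.comp (RCLike.tendsto_ofReal_atTop_cobounded ℂ)
  have hratio (ℓ : ℕ) : Tendsto (fun ω : ℝ =>
      (ascPochhammer ℂ ℓ).eval (-(ω : ℂ)) / (ascPochhammer ℂ ℓ).eval (-(n : ℂ) - (ω : ℂ)))
      atTop (𝓝 1) := by
    have := (tendsto_ascPochhammer_eval_add_div_eval_add_cobounded ℓ 0 (-(n : ℂ))).comp hx
    refine this.congr fun ω => ?_
    simp only [Function.comp_apply, add_zero]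
    congr 2
    ring
  rw [add_pow]
  refine tendsto_finsetSum _ fun ℓ _ => ?_
  simpa [mul_comm] using ((hratio ℓ).const_mul (n.choose ℓ : ℂ)).mul_const (z ^ (n - ℓ))
end
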